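/- Uniqueness of the Shapley value: any value assignment ψ satisfying Efficiency, Symmetry, Null Contribution, and Linearity (including homogeneity, i.e., ℝ-linearity in V) coincides with the Shapley value φ on all games V with V(∅) = 0. -/

import Mathlib

open Finset

/-- Shapley value of player `i` in the game `V` over player set `M`. -/
noncomputable def phi {α : Type*} [DecidableEq α] (M : Finset α) (V : Finset α → ℝ) (i : α) : ℝ :=
  ∑ S ∈ (M.erase i).powerset,
    ((Nat.factorial S.card : ℝ) * (Nat.factorial (M.card - S.card - 1) : ℝ)
        / (Nat.factorial M.card : ℝ)) * (V (insert i S) - V S)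

/-!
The four axioms pin a value down on every unanimity game `u_T` (`T ⊆ M` nonempty): players
outside `T` are null, players of `T` are symmetric, and efficiency shares `u_T(M) = 1` among
them, so each gets `1 / |T|`. Möbius inversion writes every game, on the subsets of `M`, as a
combination of unanimity games whose coefficients are the Harsanyi dividends; linearity, together
with the null-player axiom to discard the values of a game off the subsets of `M`, then
determines the value everywhere. So it suffices that the Shapley value satisfies the axioms.
Only efficiency takes a computation: in `∑ i, φ_i(V)` the coefficient of `V(T)` is
`|T| w(|T| - 1) - (|M| - |T|) w(|T|)` with `w(s) = s! (|M| - s - 1)! / |M|!`; both terms equal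
`|T|! (|M| - |T|)! / |M|!` for `∅ ≠ T ⊊ M`, and for `T = M` only the first, equal to `1`, is left.
-/

open scoped Nat

section Moebius
variable {α G : Type*} [DecidableEq α] [AddCommGroup G]

def harsanyiDividend (V : Finset α → G) (T : Finset α) : G :=
  ∑ A ∈ T.powerset, (-1 : ℤ) ^ (#T - #A) • V A

lemma sum_Icc_neg_one_pow_card_sub {A S : Finset α} (h : A ⊆ S) :
    ∑ T ∈ Icc A S, (-1 : ℤ) ^ (#T - #A) = if A = S then 1 else 0 := by
  rw [Icc_eq_image_powerset h, sum_image fun B hB C hC hBC => ?_]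
  · have hcard : ∀ B ∈ (S \ A).powerset, #(A ∪ B) - #A = #B := fun B hB => by
      rw [card_union_of_disjoint (disjoint_sdiff.mono_right (mem_powerset.1 hB)),
        Nat.add_sub_cancel_left]
    rw [sum_congr rfl fun B hB => by rw [hcard B hB], sum_powerset_neg_one_pow_card]
    simp only [sdiff_eq_empty_iff_subset, ← subset_antisymm_iff.trans (and_iff_right h)]
  · have hB := disjoint_sdiff.mono_right (mem_powerset.1 (mem_coe.1 hB))
    have hC := disjoint_sdiff.mono_right (mem_powerset.1 (mem_coe.1 hC))
    simpa [union_sdiff_cancel_left hB, union_sdiff_cancel_left hC] using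
      congrArg (· \ A) hBC

lemma sum_powerset_harsanyiDividend (V : Finset α → G) (S : Finset α) :
    ∑ T ∈ S.powerset, harsanyiDividend V T = V S := by
  unfold harsanyiDividend
  rw [sum_comm' (t' := S.powerset) (s' := fun A => Icc A S) fun T A => by
    simp only [mem_powerset, mem_Icc]
    exact ⟨fun h => ⟨⟨h.2, h.1⟩, h.2.trans h.1⟩, fun h => ⟨h.1.2, h.1.1⟩⟩]
  simp_rw [← sum_smul]
  rw [sum_congr rfl fun A hA => by rw [sum_Icc_neg_one_pow_card_sub (mem_powerset.1 hA)]]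
  simp [ite_smul]

end Moebius

section Unanimity
variable {α R : Type*} [DecidableEq α]

def unanimityGame [Zero R] [One R] (T S : Finset α) : R := if T ⊆ S then 1 else 0

lemma unanimityGame_empty [Zero R] [One R] {T : Finset α} (hT : T.Nonempty) :
    (unanimityGame T ∅ : R) = 0 := by
  simp [unanimityGame, hT.ne_empty]

lemma sum_harsanyiDividend_mul_unanimityGame [Ring R] {M S : Finset α} {V : Finset α → R}
    (hV : V ∅ = 0) (hS : S ⊆ M) :
    ∑ T ∈ M.powerset.filter Finset.Nonempty, harsanyiDividend V T * unanimityGame T S = V S := by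
  have hset : (M.powerset.filter Finset.Nonempty).filter (· ⊆ S) = S.powerset.erase ∅ := by
    ext T
    simp only [mem_filter, mem_powerset, mem_erase, nonempty_iff_ne_empty]
    exact ⟨fun h => ⟨h.1.2, h.2⟩, fun h => ⟨⟨h.2.trans hS, h.1⟩, h.2⟩⟩
  simp only [unanimityGame, mul_ite, mul_one, mul_zero]
  rw [← sum_filter, hset, ← sum_powerset_harsanyiDividend V S,
    ← add_sum_erase _ _ (empty_mem_powerset S)]
  simp [harsanyiDividend, hV]

end Unanimity

section Axioms
variable {α : Type*} [DecidableEq α] (M : Finset α) (ψ : (Finset α → ℝ) → α → ℝ)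

def Efficiency : Prop := ∀ V : Finset α → ℝ, V ∅ = 0 → ∑ i ∈ M, ψ V i = V M

def Symmetry : Prop := ∀ V : Finset α → ℝ, V ∅ = 0 → ∀ i ∈ M, ∀ j ∈ M,
  (∀ S ⊆ (M.erase i).erase j, V (insert i S) = V (insert j S)) → ψ V i = ψ V j

def NullPlayer : Prop := ∀ V : Finset α → ℝ, V ∅ = 0 → ∀ i ∈ M,
  (∀ S ⊆ M.erase i, V (insert i S) = V S) → ψ V i = 0

def Linearity : Prop := ∀ (c : ℝ) (V W : Finset α → ℝ), V ∅ = 0 → W ∅ = 0 → ∀ i ∈ M,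
  ψ (fun S => c * V S + W S) i = c * ψ V i + ψ W i

end Axioms

section Uniqueness
variable {α : Type*} {M : Finset α} {ψ : (Finset α → ℝ) → α → ℝ} {i : α}

lemma Linearity.apply_zero (hLin : Linearity M ψ) (hi : i ∈ M) : ψ (fun _ => 0) i = 0 := by
  simpa using hLin 1 (fun _ => 0) (fun _ => 0) rfl rfl i hi

lemma Linearity.apply_sum {ι : Type*} (hLin : Linearity M ψ) (A : Finset ι) (c : ι → ℝ)
    (G : ι → Finset α → ℝ) (hG : ∀ k ∈ A, G k ∅ = 0) (hi : i ∈ M) :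
    ψ (fun S => ∑ k ∈ A, c k * G k S) i = ∑ k ∈ A, c k * ψ (G k) i := by
  classical
  induction A using Finset.induction_on with
  | empty => simpa using hLin.apply_zero hi
  | insert k A hkA ih =>
    simp only [sum_insert hkA]
    rw [hLin _ _ (fun S => ∑ k ∈ A, c k * G k S) (hG k (mem_insert_self k A))
      (sum_eq_zero fun l hl => by rw [hG l (mem_insert_of_mem hl), mul_zero]) i hi,
      ih fun l hl => hG l (mem_insert_of_mem hl)]

variable [DecidableEq α]

lemma apply_eq_of_eqOn_powerset (hNull : NullPlayer M ψ) (hLin : Linearity M ψ)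
    {V W : Finset α → ℝ} (hV : V ∅ = 0) (hW : W ∅ = 0) (hVW : ∀ S ⊆ M, V S = W S)
    (hi : i ∈ M) : ψ V i = ψ W i := by
  have hnull : ψ (fun S => -1 * V S + W S) i = 0 :=
    hNull _ (by simp [hV, hW]) i hi fun S hS => by
      have hSM := hS.trans (erase_subset i M)
      rw [hVW S hSM, hVW _ (insert_subset hi hSM)]
      ring
  linarith [hLin (-1) V W hV hW i hi]

lemma NullPlayer.apply_unanimityGame_of_notMem (hNull : NullPlayer M ψ) {T : Finset α}
    (hT : T.Nonempty) (hi : i ∈ M) (hiT : i ∉ T) : ψ (unanimityGame T) i = 0 :=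
  hNull _ (unanimityGame_empty hT) i hi fun S _ => by
    simp [unanimityGame, subset_insert_iff_of_notMem hiT]

lemma Symmetry.apply_unanimityGame_eq (hSym : Symmetry M ψ) {T : Finset α} (hTM : T ⊆ M)
    (hT : T.Nonempty) {j : α} (hi : i ∈ T) (hj : j ∈ T) :
    ψ (unanimityGame T) i = ψ (unanimityGame T) j := by
  rcases eq_or_ne i j with rfl | hij
  · rfl
  refine hSym _ (unanimityGame_empty hT) i (hTM hi) j (hTM hj) fun S hS => ?_
  have hiS : i ∉ S := fun h => notMem_erase i M (mem_of_mem_erase (hS h))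
  have hjS : j ∉ S := fun h => notMem_erase j _ (hS h)
  have hi' : ¬T ⊆ insert i S := fun h => (mem_insert.1 (h hj)).elim (fun h => hij h.symm) hjS
  have hj' : ¬T ⊆ insert j S := fun h => (mem_insert.1 (h hi)).elim hij hiS
  simp [unanimityGame, hi', hj']

lemma apply_unanimityGame (hEff : Efficiency M ψ) (hSym : Symmetry M ψ)
    (hNull : NullPlayer M ψ) {T : Finset α} (hTM : T ⊆ M) (hT : T.Nonempty) (hi : i ∈ M) :
    ψ (unanimityGame T) i = if i ∈ T then (#T : ℝ)⁻¹ else 0 := by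
  split_ifs with hiT
  · have hsum : ∑ j ∈ T, ψ (unanimityGame T) j = 1 := by
      rw [sum_subset hTM fun j hj hjT => hNull.apply_unanimityGame_of_notMem hT hj hjT,
        hEff _ (unanimityGame_empty hT)]
      simp [unanimityGame, hTM]
    rw [sum_congr rfl fun j hj => hSym.apply_unanimityGame_eq hTM hT hj hiT, sum_const,
      nsmul_eq_mul] at hsum
    exact eq_inv_of_mul_eq_one_right hsum
  · exact hNull.apply_unanimityGame_of_notMem hT hi hiT

lemma eq_sum_harsanyiDividend (hEff : Efficiency M ψ) (hSym : Symmetry M ψ)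
    (hNull : NullPlayer M ψ) (hLin : Linearity M ψ) {V : Finset α → ℝ} (hV : V ∅ = 0)
    (hi : i ∈ M) :
    ψ V i = ∑ T ∈ M.powerset.filter Finset.Nonempty,
      harsanyiDividend V T * if i ∈ T then (#T : ℝ)⁻¹ else 0 := by
  have hgames : ∀ T ∈ M.powerset.filter Finset.Nonempty, (unanimityGame T ∅ : ℝ) = 0 :=
    fun T hT => unanimityGame_empty (mem_filter.1 hT).2
  rw [apply_eq_of_eqOn_powerset hNull hLin hV
      (sum_eq_zero fun T hT => by rw [hgames T hT, mul_zero])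
      (fun S hS => (sum_harsanyiDividend_mul_unanimityGame hV hS).symm) hi,
    hLin.apply_sum _ _ _ hgames hi]
  refine sum_congr rfl fun T hT => ?_
  obtain ⟨hTM, hT⟩ := mem_filter.1 hT
  rw [apply_unanimityGame hEff hSym hNull (mem_powerset.1 hTM) hT hi]

end Uniqueness

lemma sum_ite_mem_of_subset {ι β : Type*} [DecidableEq ι] [AddCommMonoid β] (s : Finset ι)
    {t : Finset ι} (ht : t ⊆ s) (a b : β) :
    ∑ i ∈ s, (if i ∈ t then a else b) = #t • a + (#s - #t) • b := by
  rw [sum_ite, sum_const, sum_const, filter_mem_eq_inter, inter_eq_right.2 ht,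
    ← sdiff_eq_filter, card_sdiff_of_subset ht]

section ShapleyValue

noncomputable def shapleyWeight (m s : ℕ) : ℝ := (s ! * (m - s - 1)! : ℝ) / m !

lemma card_mul_shapleyWeight_pred {m t : ℕ} (ht : 0 < t) (htm : t ≤ m) :
    t * shapleyWeight m (t - 1) = (t ! * (m - t)! : ℝ) / m ! := by
  rw [shapleyWeight, ← mul_div_assoc, ← mul_assoc, show m - (t - 1) - 1 = m - t by omega]
  exact_mod_cast congrArg (fun n : ℕ => (n * (m - t)! : ℝ) / m !) (Nat.mul_factorial_pred ht.ne')

lemma card_sub_mul_shapleyWeight {m t : ℕ} (htm : t < m) :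
    ((m - t : ℕ) : ℝ) * shapleyWeight m t = (t ! * (m - t)! : ℝ) / m ! := by
  rw [shapleyWeight, ← mul_div_assoc, mul_left_comm]
  exact_mod_cast congrArg (fun n : ℕ => (t ! * n : ℝ) / m !) (Nat.mul_factorial_pred (by omega))

variable {α : Type*} [DecidableEq α] (M : Finset α)

lemma phi_eq_sum_shapleyWeight (V : Finset α → ℝ) (i : α) :
    phi M V i = ∑ S ∈ (M.erase i).powerset, shapleyWeight #M #S * (V (insert i S) - V S) :=
  rfl

lemma phi_nullPlayer : NullPlayer M (phi M) := fun V _ i _ hV =>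
  sum_eq_zero fun S hS => by rw [hV S (mem_powerset.1 hS), sub_self, mul_zero]

lemma phi_linearity : Linearity M (phi M) := fun c V W _ _ i _ => by
  simp only [phi_eq_sum_shapleyWeight, mul_sum, ← sum_add_distrib]
  exact sum_congr rfl fun S _ => by ring

lemma phi_symmetry : Symmetry M (phi M) := fun V _ i hi j hj hV => by
  rcases eq_or_ne i j with rfl | hij
  · rfl
  set E := (M.erase i).erase j
  have hiE : i ∉ E := fun h => notMem_erase i M (mem_of_mem_erase h)
  have hjE : j ∉ E := notMem_erase j _
  have hEi : M.erase i = insert j E := (insert_erase (mem_erase.2 ⟨hij.symm, hj⟩)).symm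
  have hEj : M.erase j = insert i E := by
    rw [show E = (M.erase j).erase i from erase_right_comm, insert_erase (mem_erase.2 ⟨hij, hi⟩)]
  simp only [phi_eq_sum_shapleyWeight, hEi, hEj, sum_powerset_insert hjE,
    sum_powerset_insert hiE]
  congr 1
  · exact sum_congr rfl fun S hS => by rw [hV S (mem_powerset.1 hS)]
  · refine sum_congr rfl fun S hS => ?_
    have hS := mem_powerset.1 hS
    rw [card_insert_of_notMem fun h => hjE (hS h), card_insert_of_notMem fun h => hiE (hS h),
      insert_comm, hV S hS]

noncomputable def shapleyCoeff (i : α) (T : Finset α) : ℝ :=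
  if i ∈ T then shapleyWeight #M (#T - 1) else -shapleyWeight #M #T

lemma phi_eq_sum_powerset {V : Finset α → ℝ} {i : α} (hi : i ∈ M) :
    phi M V i = ∑ T ∈ M.powerset, shapleyCoeff M i T * V T := by
  have hsplit := sum_powerset_insert (notMem_erase i M) fun T => shapleyCoeff M i T * V T
  rw [insert_erase hi] at hsplit
  rw [hsplit, phi_eq_sum_shapleyWeight, add_comm, ← sum_add_distrib]
  refine sum_congr rfl fun S hS => ?_
  have hiS : i ∉ S := fun h => notMem_erase i M (mem_powerset.1 hS h)
  rw [shapleyCoeff, shapleyCoeff, if_pos (mem_insert_self i S), if_neg hiS,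
    card_insert_of_notMem hiS, Nat.add_sub_cancel]
  ring

variable {M}

lemma sum_shapleyCoeff_of_ssubset {T : Finset α} (hT : T.Nonempty) (hTM : T ⊂ M) :
    ∑ i ∈ M, shapleyCoeff M i T = 0 := by
  rw [sum_congr rfl fun i _ => shapleyCoeff.eq_def M i T, sum_ite_mem_of_subset M hTM.subset,
    nsmul_eq_mul, nsmul_eq_mul, mul_neg,
    card_mul_shapleyWeight_pred (card_pos.2 hT) (card_le_card hTM.subset),
    card_sub_mul_shapleyWeight (card_lt_card hTM), add_neg_cancel]

lemma sum_shapleyCoeff_self (hM : M.Nonempty) : ∑ i ∈ M, shapleyCoeff M i M = 1 := by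
  rw [sum_congr rfl fun i _ => shapleyCoeff.eq_def M i M, sum_ite_mem_of_subset M subset_rfl,
    Nat.sub_self, zero_smul, add_zero, nsmul_eq_mul,
    card_mul_shapleyWeight_pred (card_pos.2 hM) le_rfl, Nat.sub_self, Nat.factorial_zero,
    Nat.cast_one, mul_one, div_self (by positivity)]

lemma phi_efficiency (hM : M.Nonempty) : Efficiency M (phi M) := fun V hV => by
  rw [sum_congr rfl fun i hi => phi_eq_sum_powerset M hi, sum_comm]
  simp_rw [← sum_mul]
  rw [sum_eq_single_of_mem M (mem_powerset_self M) fun T hT hTM => ?_, sum_shapleyCoeff_self hM,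
    one_mul]
  rcases T.eq_empty_or_nonempty with rfl | hT'
  · rw [hV, mul_zero]
  · rw [sum_shapleyCoeff_of_ssubset hT' (ssubset_of_subset_of_ne (mem_powerset.1 hT) hTM),
      zero_mul]

end ShapleyValue

theorem shapley_uniqueness_general {α : Type*} [DecidableEq α] (M : Finset α)
    (ψ : (Finset α → ℝ) → α → ℝ)
    (hEff : ∀ V : Finset α → ℝ, V ∅ = 0 → ∑ i ∈ M, ψ V i = V M)
    (hSym : ∀ V : Finset α → ℝ, V ∅ = 0 → ∀ i ∈ M, ∀ j ∈ M,
      (∀ S ⊆ (M.erase i).erase j, V (insert i S) = V (insert j S)) → ψ V i = ψ V j)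
    (hNull : ∀ V : Finset α → ℝ, V ∅ = 0 → ∀ i ∈ M,
      (∀ S ⊆ M.erase i, V (insert i S) = V S) → ψ V i = 0)
    (hLin : ∀ (c : ℝ) (V W : Finset α → ℝ), V ∅ = 0 → W ∅ = 0 → ∀ i ∈ M,
      ψ (fun S => c * V S + W S) i = c * ψ V i + ψ W i) :
    ∀ V : Finset α → ℝ, V ∅ = 0 → ∀ i ∈ M, ψ V i = phi M V i := by
  intro V hV i hi
  rw [eq_sum_harsanyiDividend hEff hSym hNull hLin hV hi,
    eq_sum_harsanyiDividend (phi_efficiency ⟨i, hi⟩) (phi_symmetry M) (phi_nullPlayer M)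
      (phi_linearity M) hV hi]

theorem shapley_uniqueness {α : Type*} [DecidableEq α] (M : Finset α) (hM : M.Nonempty)
    (ψ : (Finset α → ℝ) → α → ℝ)
    (hEff : ∀ V : Finset α → ℝ, V ∅ = 0 → ∑ i ∈ M, ψ V i = V M)
    (hSym : ∀ V : Finset α → ℝ, V ∅ = 0 → ∀ i ∈ M, ∀ j ∈ M,
      (∀ S ⊆ (M.erase i).erase j, V (insert i S) = V (insert j S)) → ψ V i = ψ V j)
    (hNull : ∀ V : Finset α → ℝ, V ∅ = 0 → ∀ i ∈ M,
      (∀ S ⊆ M.erase i, V (insert i S) = V S) → ψ V i = 0)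
    (hLin : ∀ (c : ℝ) (V W : Finset α → ℝ), V ∅ = 0 → W ∅ = 0 → ∀ i ∈ M,
      ψ (fun S => c * V S + W S) i = c * ψ V i + ψ W i) :
    ∀ V : Finset α → ℝ, V ∅ = 0 → ∀ i ∈ M, ψ V i = phi M V i :=
  shapley_uniqueness_general M ψ hEff hSym hNull hLin
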